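/- Let g and g^ε belong to L²_μ(0,1), where dμ(x) = dx/√(x(1−x)), and let cₙ and cₙ^ε be the Legendre coefficients obtained via the Fourier coefficients of the auxiliary functions η and η^ε built from g and g^ε respectively, i.e. cₙ = (−1)ⁿ√(2n+1) ∫_{−π}^{π} η(t) e^{int} dt with η(t) = (sgn(t)/(2πi)) e^{it/2} g(sin²(t/2)). Then for every n ≥ 0, |cₙ − cₙ^ε| ≤ √((2n+1)/π) · ‖g − g^ε‖_{L²_μ(0,1)}. -/

import Mathlib

open MeasureTheory Real Filter

/-- The weighted measure `dμ(x) = dx/√(x(1−x))` on `(0,1)`. -/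
noncomputable def muMeas : Measure ℝ :=
  (volume.restrict (Set.Ioo 0 1)).withDensity
    (fun x => ENNReal.ofReal (1 / Real.sqrt (x * (1 - x))))

/-- The auxiliary function `η(t) = (sgn t/(2πi)) e^{it/2} g(sin²(t/2))` on `[-π,π)`. -/
noncomputable def eta0 (g : ℝ → ℝ) (t : ℝ) : ℂ :=
  ((Real.sign t : ℂ) / (2 * (π:ℂ) * Complex.I)) * Complex.exp (Complex.I * (t:ℂ) / 2) *
    (g (Real.sin (t/2)^2) : ℂ)

/-- The `2π`-periodic extension of `eta0 g` from `[-π,π)` to all of `ℝ`. -/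
noncomputable def etaP (g : ℝ → ℝ) (t : ℝ) : ℂ :=
  eta0 g (toIcoMod Real.two_pi_pos (-π) t)

/-!
The substitution `x = sin²(t/2) = (1 - cos t)/2` pushes Lebesgue measure on `(0, π)` forward to
`μ`, since its Jacobian `sin t / 2` equals `√(x(1-x))`; as `t ↦ sin²(t/2)` is even, Lebesgue
measure on `(-π, π)` goes to `2μ`. Because `|η(t)| ≤ |g(sin²(t/2))| / (2π)`, Cauchy–Schwarz on
`(-π, π)` gives `|γ̂ₙ| ≤ (2π)⁻¹ √(2π) √(2 ‖g‖²) = ‖g‖ / √π` with `‖g‖ = ‖g‖_{L²_μ}`, and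
`γ̂ₙ` is linear in `g`.
-/

open scoped ENNReal
open Set

lemma sin_sq_half_eq (x : ℝ) : sin (x / 2) ^ 2 = (1 - cos x) / 2 := by
  have := cos_sq (x / 2)
  rw [show 2 * (x / 2) = x by ring] at this
  nlinarith [sin_sq_add_cos_sq (x / 2)]

lemma measurable_sin_sq_half : Measurable fun t : ℝ => sin (t / 2) ^ 2 := by fun_prop

lemma map_volume_restrict_Ioo_sin_sq_half :
    (volume.restrict (Ioo 0 π)).map (fun t => sin (t / 2) ^ 2) = muMeas := by
  have hφ : (fun t : ℝ => sin (t / 2) ^ 2) = fun t => (1 - cos t) / 2 := funext sin_sq_half_eq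
  have hmeas := measurable_sin_sq_half
  rw [hφ] at hmeas ⊢
  have hmono : StrictMonoOn (fun t : ℝ => (1 - cos t) / 2) (Icc 0 π) := fun a ha b hb hab => by
    have := strictAntiOn_cos ha hb hab
    dsimp only
    linarith
  have himage : (fun t : ℝ => (1 - cos t) / 2) '' Ioo 0 π = Ioo 0 1 := by
    rw [ContinuousOn.image_Ioo_of_strictMonoOn pi_pos.le (by fun_prop) hmono]
    norm_num
  have hderiv (t : ℝ) : HasDerivAt (fun t : ℝ => (1 - cos t) / 2) (sin t / 2) t := by
    simpa using ((hasDerivAt_cos t).const_sub 1).div_const 2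
  have hjac : ∀ t ∈ Ioo 0 π, ENNReal.ofReal (sin t / 2) *
      ENNReal.ofReal (1 / √((1 - cos t) / 2 * (1 - (1 - cos t) / 2))) = 1 := by
    intro t ht
    have hsin := sin_pos_of_pos_of_lt_pi ht.1 ht.2
    have : (1 - cos t) / 2 * (1 - (1 - cos t) / 2) = (sin t / 2) ^ 2 := by
      nlinarith [sin_sq_add_cos_sq t]
    rw [this, sqrt_sq (by positivity), ← ENNReal.ofReal_mul (by positivity),
      mul_one_div_cancel (by positivity), ENNReal.ofReal_one]
  ext s hs
  rw [Measure.map_apply hmeas hs, Measure.restrict_apply (hmeas hs), muMeas,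
    withDensity_apply _ hs, Measure.restrict_restrict hs, ← himage, ← image_preimage_inter,
    lintegral_image_eq_lintegral_deriv_mul_of_monotoneOn ((hmeas hs).inter measurableSet_Ioo)
      (fun t _ => (hderiv t).hasDerivWithinAt)
      (hmono.monotoneOn.mono (inter_subset_right.trans Ioo_subset_Icc_self)),
    setLIntegral_congr_fun ((hmeas hs).inter measurableSet_Ioo) (fun t ht => hjac t ht.2),
    setLIntegral_one]

lemma map_volume_restrict_Ioo_neg_pi_sin_sq_half :
    (volume.restrict (Ioo (-π) π)).map (fun t => sin (t / 2) ^ 2) = (2 : ℝ≥0∞) • muMeas := by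
  have hneg : (volume.restrict (Ioc (-π) 0)).map (fun t => sin (t / 2) ^ 2) = muMeas := by
    rw [← map_volume_restrict_Ioo_sin_sq_half, Measure.restrict_congr_set Ioo_ae_eq_Ioc.symm,
      ← Measure.map_neg_eq_self (volume : Measure ℝ), measurableEmbedding_neg.restrict_map,
      Measure.map_map measurable_sin_sq_half measurable_neg]
    simp [Function.comp_def, neg_div, neg_Ioo]
  rw [← Ioc_union_Ioo_eq_Ioo (neg_nonpos.2 pi_pos.le) pi_pos,
    Measure.restrict_union (Ioc_disjoint_Ioi_same.mono_right Ioo_subset_Ioi_self) measurableSet_Ioo,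
    Measure.map_add _ _ measurable_sin_sq_half, hneg, map_volume_restrict_Ioo_sin_sq_half, two_smul]

lemma integral_muMeas (F : ℝ → ℝ) :
    ∫ x, F x ∂muMeas = ∫ x in Ioo 0 1, F x / √(x * (1 - x)) := by
  rw [muMeas, integral_withDensity_eq_integral_toReal_smul (by fun_prop)
    (ae_of_all _ fun _ => ENNReal.ofReal_lt_top)]
  refine integral_congr_ae (ae_of_all _ fun x => ?_)
  simp only [ENNReal.toReal_ofReal (one_div_nonneg.2 (sqrt_nonneg _)), smul_eq_mul]
  ring

lemma memLp_comp_sin_sq_half {f : ℝ → ℝ} (hf : MemLp f 2 muMeas) :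
    MemLp (fun t => f (sin (t / 2) ^ 2)) 2 (volume.restrict (Ioo (-π) π)) := by
  refine MemLp.comp_of_map ?_ measurable_sin_sq_half.aemeasurable
  rw [map_volume_restrict_Ioo_neg_pi_sin_sq_half]
  exact hf.smul_measure ENNReal.ofNat_ne_top

lemma integral_comp_sin_sq_half {F : ℝ → ℝ} (hF : AEStronglyMeasurable F muMeas) :
    ∫ t in Ioo (-π) π, F (sin (t / 2) ^ 2) = 2 * ∫ x in Ioo 0 1, F x / √(x * (1 - x)) := by
  rw [← integral_map measurable_sin_sq_half.aemeasurable (by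
      rw [map_volume_restrict_Ioo_neg_pi_sin_sq_half]; exact hF.smul_measure _),
    map_volume_restrict_Ioo_neg_pi_sin_sq_half, integral_smul_measure, integral_muMeas]
  simp

lemma integral_abs_le_sqrt_measureReal_mul_sqrt_integral_sq {α : Type*} [MeasurableSpace α]
    {μ : Measure α} [IsFiniteMeasure μ] {f : α → ℝ} (hf : MemLp f 2 μ) :
    ∫ x, |f x| ∂μ ≤ √(μ.real univ) * √(∫ x, f x ^ 2 ∂μ) := by
  have h := integral_mul_le_Lp_mul_Lq_of_nonneg Real.HolderConjugate.two_two
    (ae_of_all _ fun x => abs_nonneg (f x)) (ae_of_all _ fun _ => zero_le_one)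
    (by rw [ENNReal.ofReal_ofNat]; exact hf.abs) (by rw [ENNReal.ofReal_ofNat]; exact memLp_const 1)
  simp only [mul_one, one_rpow, integral_const, smul_eq_mul] at h
  rw [← sqrt_eq_rpow, ← sqrt_eq_rpow] at h
  simpa [mul_comm] using h

lemma Real.abs_sign_le_one (r : ℝ) : |Real.sign r| ≤ 1 := by
  rcases Real.sign_apply_eq r with h | h | h <;> simp [h]

lemma Real.measurable_sign : Measurable Real.sign := by
  unfold Real.sign
  exact Measurable.ite measurableSet_Iio measurable_const
    (Measurable.ite measurableSet_Ioi measurable_const measurable_const)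

lemma etaP_eq_eta0 (f : ℝ → ℝ) {t : ℝ} (ht : t ∈ Ico (-π) π) : etaP f t = eta0 f t := by
  rw [etaP, (toIcoMod_eq_self _).2 (by rwa [show -π + 2 * π = π by ring])]

lemma etaP_sub (f f' : ℝ → ℝ) (t : ℝ) : etaP (f - f') t = etaP f t - etaP f' t := by
  simp only [etaP, eta0, Pi.sub_apply]
  push_cast
  ring

lemma norm_eta0_le (f : ℝ → ℝ) (t : ℝ) : ‖eta0 f t‖ ≤ (2 * π)⁻¹ * |f (sin (t / 2) ^ 2)| := by
  have hexp : ‖Complex.exp (Complex.I * t / 2)‖ = 1 := by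
    rw [Complex.norm_exp]; simp
  simp only [eta0, norm_mul, norm_div, hexp, Complex.norm_real, Complex.norm_I, Real.norm_eq_abs,
    abs_of_pos pi_pos, mul_one, Complex.norm_two, ← one_div]
  gcongr
  exact abs_sign_le_one t

lemma aestronglyMeasurable_eta0 {f : ℝ → ℝ} {μ : Measure ℝ}
    (hf : AEStronglyMeasurable (fun t => f (sin (t / 2) ^ 2)) μ) :
    AEStronglyMeasurable (eta0 f) μ := by
  have hfactor : Measurable fun t : ℝ =>
      (Real.sign t : ℂ) / (2 * π * Complex.I) * Complex.exp (Complex.I * t / 2) :=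
    ((Complex.measurable_ofReal.comp measurable_sign).div_const _).mul (by fun_prop)
  exact hfactor.aestronglyMeasurable.mul (Complex.continuous_ofReal.comp_aestronglyMeasurable hf)

lemma norm_etaP_mul_exp_le (f : ℝ → ℝ) (n : ℕ) {t : ℝ} (ht : t ∈ Ico (-π) π) :
    ‖etaP f t * Complex.exp (Complex.I * n * t)‖ ≤ (2 * π)⁻¹ * |f (sin (t / 2) ^ 2)| := by
  have hexp : ‖Complex.exp (Complex.I * n * t)‖ = 1 := by
    rw [Complex.norm_exp]; simp
  rw [norm_mul, hexp, mul_one, etaP_eq_eta0 f ht]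
  exact norm_eta0_le f t

/-- The Fourier coefficient `γ̂ₙ` of `η`. -/
noncomputable def etaFourierCoeff (f : ℝ → ℝ) (n : ℕ) : ℂ :=
  ∫ t in (-π)..π, etaP f t * Complex.exp (Complex.I * n * t)

lemma intervalIntegrable_etaP_mul_exp {f : ℝ → ℝ} (hf : MemLp f 2 muMeas) (n : ℕ) :
    IntervalIntegrable (fun t => etaP f t * Complex.exp (Complex.I * n * t)) volume (-π) π := by
  rw [intervalIntegrable_iff_integrableOn_Ioo_of_le (by linarith [pi_pos])]
  have hφ := memLp_comp_sin_sq_half hf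
  refine ((hφ.integrable one_le_two).abs.const_mul (2 * π)⁻¹).mono' ?_ ?_
  · refine ((aestronglyMeasurable_eta0 hφ.1).mul (by fun_prop : Continuous fun t : ℝ =>
      Complex.exp (Complex.I * n * t)).aestronglyMeasurable).congr ?_
    filter_upwards [ae_restrict_mem measurableSet_Ioo] with t ht
    rw [Pi.mul_apply, etaP_eq_eta0 f (Ioo_subset_Ico_self ht)]
  · filter_upwards [ae_restrict_mem measurableSet_Ioo] with t ht
    exact norm_etaP_mul_exp_le f n (Ioo_subset_Ico_self ht)

lemma etaFourierCoeff_sub {f f' : ℝ → ℝ} (hf : MemLp f 2 muMeas) (hf' : MemLp f' 2 muMeas)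
    (n : ℕ) :
    etaFourierCoeff f n - etaFourierCoeff f' n = etaFourierCoeff (f - f') n := by
  rw [etaFourierCoeff, etaFourierCoeff, etaFourierCoeff, ← intervalIntegral.integral_sub
    (intervalIntegrable_etaP_mul_exp hf n) (intervalIntegrable_etaP_mul_exp hf' n)]
  simp only [etaP_sub, sub_mul]

lemma norm_etaFourierCoeff_le {f : ℝ → ℝ} (hf : MemLp f 2 muMeas) (n : ℕ) :
    ‖etaFourierCoeff f n‖ ≤ √(∫ x in Ioo 0 1, f x ^ 2 / √(x * (1 - x))) / √π := by
  have hφ := memLp_comp_sin_sq_half hf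
  have hL1 : ‖etaFourierCoeff f n‖ ≤ (2 * π)⁻¹ * ∫ t in Ioo (-π) π, |f (sin (t / 2) ^ 2)| := by
    rw [etaFourierCoeff, intervalIntegral.integral_of_le (by linarith [pi_pos]),
      integral_Ioc_eq_integral_Ioo, ← integral_const_mul]
    refine norm_integral_le_of_norm_le ((hφ.integrable one_le_two).abs.const_mul _) ?_
    filter_upwards [ae_restrict_mem measurableSet_Ioo] with t ht
    exact norm_etaP_mul_exp_le f n (Ioo_subset_Ico_self ht)
  have hL2 := integral_abs_le_sqrt_measureReal_mul_sqrt_integral_sq hφ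
  rw [integral_comp_sin_sq_half (hf.1.aemeasurable.pow_const 2).aestronglyMeasurable,
    measureReal_restrict_apply_univ, Real.volume_real_Ioo_of_le (by linarith [pi_pos])] at hL2
  calc ‖etaFourierCoeff f n‖
      ≤ (2 * π)⁻¹ * (√(π - -π) * √(2 * ∫ x in Ioo 0 1, f x ^ 2 / √(x * (1 - x)))) :=
        hL1.trans (by gcongr)
    _ = √(∫ x in Ioo 0 1, f x ^ 2 / √(x * (1 - x))) / √π := by
        rw [sub_neg_eq_add, ← two_mul, sqrt_mul zero_le_two, sqrt_mul zero_le_two]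
        field_simp
        rw [sq_sqrt zero_le_two, sq_sqrt pi_pos.le]

/-- If `g, g^ε ∈ L²_μ(0,1)` and `cₙ`, `cₙ^ε` are the Legendre coefficients obtained from the
Fourier coefficients of the corresponding auxiliary functions, then
`|cₙ − cₙ^ε| ≤ √((2n+1)/π) ‖g − g^ε‖_{L²_μ}`. -/
theorem coefficient_noise_bound (g ge : ℝ → ℝ)
    (hg : MemLp g 2 muMeas) (hge : MemLp ge 2 muMeas)
    (c ce : ℕ → ℂ)
    (hc : ∀ n : ℕ, c n = (-1)^n * (Real.sqrt (2*n+1) : ℂ) *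
      ∫ t in (-π)..π, etaP g t * Complex.exp (Complex.I * (n:ℂ) * (t:ℂ)))
    (hce : ∀ n : ℕ, ce n = (-1)^n * (Real.sqrt (2*n+1) : ℂ) *
      ∫ t in (-π)..π, etaP ge t * Complex.exp (Complex.I * (n:ℂ) * (t:ℂ))) :
    ∀ n : ℕ, ‖c n - ce n‖ ≤ Real.sqrt ((2*n+1)/π) *
      Real.sqrt (∫ x in Set.Ioo (0:ℝ) 1, (g x - ge x)^2 / Real.sqrt (x * (1 - x))) := by
  intro n
  have hdiff : c n - ce n = (-1) ^ n * (√(2 * n + 1) : ℂ) * etaFourierCoeff (g - ge) n := by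
    rw [← etaFourierCoeff_sub hg hge, mul_sub, hc, hce, etaFourierCoeff, etaFourierCoeff]
  calc ‖c n - ce n‖ = √(2 * n + 1) * ‖etaFourierCoeff (g - ge) n‖ := by
        rw [hdiff, norm_mul, norm_mul, norm_pow, norm_neg, norm_one, one_pow, one_mul,
          Complex.norm_real, norm_of_nonneg (sqrt_nonneg _)]
    _ ≤ √(2 * n + 1) * (√(∫ x in Ioo 0 1, (g x - ge x) ^ 2 / √(x * (1 - x))) / √π) := by
        gcongr
        exact norm_etaFourierCoeff_le (hg.sub hge) n
    _ = √((2 * n + 1) / π) * √(∫ x in Ioo 0 1, (g x - ge x) ^ 2 / √(x * (1 - x))) := by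
        rw [sqrt_div' _ pi_pos.le]
        ring
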